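/- Let (k_n) and (k_n^o) be sequences of nonzero complex numbers with |k_1| ≤ |k_2| ≤ ... and |k_1^o| ≤ |k_2^o| ≤ ..., and define counting functions n(r) = #{m : |k_m| ≤ r} and n_o(r) = #{m : |k_m^o| ≤ r} (assumed finite for all r). If sup_n |k_n - k_n^o| = s < ∞ and n_o(r) = C r + o(r) as r → ∞ for some real C, then n(r) = C r + o(r) as r → ∞. -/
import Mathlib


open Filter Asymptotics

/-- Stability of the counting-function asymptotics `n(r) = C r + o(r)` under bounded
perturbations of a sequence arranged by nondecreasing modulus. -/
theorem stmt_2 (k ko : ℕ → ℂ)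
    (hk0 : ∀ n, k n ≠ 0) (hko0 : ∀ n, ko n ≠ 0)
    (hmono : Monotone fun n => ‖k n‖) (hmonoo : Monotone fun n => ‖ko n‖)
    (hfin : ∀ r : ℝ, {m : ℕ | ‖k m‖ ≤ r}.Finite)
    (hfino : ∀ r : ℝ, {m : ℕ | ‖ko m‖ ≤ r}.Finite)
    (s : ℝ) (hs : ∀ n, ‖k n - ko n‖ ≤ s)
    (C : ℝ)
    (hasymp : (fun r : ℝ => (Nat.card {m : ℕ | ‖ko m‖ ≤ r} : ℝ) - C * r)
        =o[atTop] fun r : ℝ => r) :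
    (fun r : ℝ => (Nat.card {m : ℕ | ‖k m‖ ≤ r} : ℝ) - C * r) =o[atTop] fun r : ℝ => r := by
  have hs0 : 0 ≤ s := le_trans (norm_nonneg _) (hs 0)
  rw [isLittleO_iff] at hasymp ⊢
  intro ε hε
  have hεhalf : (0:ℝ) < ε / 2 := by positivity
  have h1 := hasymp hεhalf
  have hup : ∀ᶠ r : ℝ in atTop,
      ‖(Nat.card {m : ℕ | ‖ko m‖ ≤ r + s} : ℝ) - C * (r + s)‖ ≤ ε / 2 * ‖r + s‖ :=
    (tendsto_atTop_add_const_right atTop s tendsto_id).eventually h1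
  have hlo : ∀ᶠ r : ℝ in atTop,
      ‖(Nat.card {m : ℕ | ‖ko m‖ ≤ r - s} : ℝ) - C * (r - s)‖ ≤ ε / 2 * ‖r - s‖ :=
    (tendsto_atTop_add_const_right atTop (-s) tendsto_id).eventually h1
  filter_upwards [hup, hlo, eventually_ge_atTop s,
    eventually_ge_atTop (s + 2 * (|C| * s) / ε)] with r h2 h3 hrs hrbig
  have hr0 : 0 ≤ r := le_trans hs0 hrs
  -- set inclusions
  have key1 : (Nat.card {m : ℕ | ‖k m‖ ≤ r} : ℝ) ≤ Nat.card {m : ℕ | ‖ko m‖ ≤ r + s} := by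
    have := Nat.card_mono (hfino (r + s)) (fun m hm => by
      have : ‖ko m‖ ≤ ‖k m‖ + ‖k m - ko m‖ := by
        have := norm_sub_norm_le (ko m) (k m)
        have h' := hs m
        calc ‖ko m‖ = ‖k m - (k m - ko m)‖ := by ring_nf
          _ ≤ ‖k m‖ + ‖k m - ko m‖ := norm_sub_le _ _
      exact le_trans this (add_le_add hm (hs m)))
    exact_mod_cast this
  have key2 : (Nat.card {m : ℕ | ‖ko m‖ ≤ r - s} : ℝ) ≤ Nat.card {m : ℕ | ‖k m‖ ≤ r} := by
    have := Nat.card_mono (hfin r) (fun m hm => by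
      have h' : ‖k m‖ ≤ ‖ko m‖ + ‖k m - ko m‖ := by
        calc ‖k m‖ = ‖ko m + (k m - ko m)‖ := by ring_nf
          _ ≤ ‖ko m‖ + ‖k m - ko m‖ := norm_add_le _ _
      have : ‖k m‖ ≤ (r - s) + s := le_trans h' (add_le_add hm (hs m))
      simpa using this)
    exact_mod_cast this
  -- norms of shifted args
  have hnrs : ‖r + s‖ = r + s := by rw [Real.norm_eq_abs, abs_of_nonneg]; linarith
  have hnrms : ‖r - s‖ = r - s := by rw [Real.norm_eq_abs, abs_of_nonneg]; linarith
  rw [hnrs] at h2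
  rw [hnrms] at h3
  have hCs : C * s ≤ |C| * s := mul_le_mul_of_nonneg_right (le_abs_self C) hs0
  have hCs' : -(|C| * s) ≤ C * s := by
    have := neg_abs_le C
    nlinarith
  rw [Real.norm_eq_abs] at h2 h3
  have habs2 : -(ε / 2 * (r + s)) ≤ (Nat.card {m : ℕ | ‖ko m‖ ≤ r + s} : ℝ) - C * (r + s) ∧
      (Nat.card {m : ℕ | ‖ko m‖ ≤ r + s} : ℝ) - C * (r + s) ≤ ε / 2 * (r + s) := abs_le.mp h2
  have habs3 : -(ε / 2 * (r - s)) ≤ (Nat.card {m : ℕ | ‖ko m‖ ≤ r - s} : ℝ) - C * (r - s) ∧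
      (Nat.card {m : ℕ | ‖ko m‖ ≤ r - s} : ℝ) - C * (r - s) ≤ ε / 2 * (r - s) := abs_le.mp h3
  rw [Real.norm_eq_abs, Real.norm_eq_abs, abs_of_nonneg hr0, abs_le]
  have hbig : ε / 2 * s + |C| * s ≤ ε / 2 * r := by
    have : ε * (r - s) ≥ 2 * (|C| * s) := by
      have : r - s ≥ 2 * (|C| * s) / ε := by linarith
      calc ε * (r - s) ≥ ε * (2 * (|C| * s) / ε) := by nlinarith
        _ = 2 * (|C| * s) := by field_simp
    linarith
  constructor
  · -- lower bound
    have : (Nat.card {m : ℕ | ‖ko m‖ ≤ r - s} : ℝ) - C * (r - s) ≥ -(ε / 2 * (r - s)) :=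
      habs3.1
    nlinarith [key2]
  · have : (Nat.card {m : ℕ | ‖ko m‖ ≤ r + s} : ℝ) - C * (r + s) ≤ ε / 2 * (r + s) :=
      habs2.2
    nlinarith [key1]
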